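/- arXiv:2207.05919 — 4 statements merged into one kernel-verified Lean document; each statement's English description precedes it below -/
import Mathlib

section
/- In U_q(sl₂) with B := F + q^{-1}EK^{-1} acting on the 3-dimensional simple module V(2ϖ₁) with basis v₀, v₁, v₂ (v₀ highest weight, v₁ = Fv₀, v₂ = F^{(2)}v₀), there is a unique (up to scalar) vector w₀ ∈ V(2ϖ₁) annihilated by B = F + q^{-1}EK^{-1}, and it can be normalized so that w₀ ∈ v₀ + q^{-1}·(A_∞-span of v₁, v₂), where A_∞ = Q[[q^{-1}]] ∩ Q(q). -/
open Matrix in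
set_option synthInstance.maxHeartbeats 1000000 in
set_option maxHeartbeats 1000000 in
/-- In `U_q(sl₂)` acting on the 3-dimensional simple module
`V(2ϖ₁)` with basis `v₀, v₁ = Fv₀, v₂ = F^{(2)}v₀` (so `Fv_k = [k+1]v_{k+1}`,
`Ev_k = [3-k]v_{k-1}`, `Kv_k = q^{2-2k}v_k`), the operator `B = F + q⁻¹EK⁻¹`
has a one-dimensional kernel (unique invariant vector up to scalar), and the
kernel contains a vector `w₀` normalized so that `w₀ ∈ v₀ + q⁻¹·(A_∞-span of
v₁, v₂)`, where `A_∞` consists of rational functions regular at `q = ∞`. -/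
theorem stmt_7 (q : RatFunc ℚ) (hq : q = RatFunc.X)
    (qint : ℤ → RatFunc ℚ)
    (hqint : ∀ k : ℤ, qint k = (q ^ k - q ^ (-k)) / (q - q⁻¹))
    (E F Kinv B : Matrix (Fin 3) (Fin 3) (RatFunc ℚ))
    (hE : E = !![0, qint 2, 0; 0, 0, 1; 0, 0, 0])
    (hF : F = !![0, 0, 0; 1, 0, 0; 0, qint 2, 0])
    (hKinv : Kinv = !![q ^ (-2 : ℤ), 0, 0; 0, 1, 0; 0, 0, q ^ (2 : ℤ)])
    (hB : B = F + q⁻¹ • (E * Kinv)) :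
    ∃ w0 : Fin 3 → RatFunc ℚ,
      B.mulVec w0 = 0 ∧ w0 0 = 1 ∧
      (∃ c1 c2 : RatFunc ℚ, w0 1 = q⁻¹ * c1 ∧ w0 2 = q⁻¹ * c2 ∧
        c1.intDegree ≤ 0 ∧ c2.intDegree ≤ 0) ∧
      ∀ w : Fin 3 → RatFunc ℚ, B.mulVec w = 0 → ∃ c : RatFunc ℚ, w = c • w0 := by
  have hq0 : q ≠ 0 := by rw [hq]; exact RatFunc.X_ne_zero
  have hq2 : q ^ 2 ≠ 1 := by
    intro h
    have := congrArg RatFunc.intDegree h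
    rw [hq] at this
    simp [pow_two, RatFunc.intDegree_mul RatFunc.X_ne_zero RatFunc.X_ne_zero,
      RatFunc.intDegree_X, RatFunc.intDegree_one] at this
  have hq4 : q ^ 4 ≠ 1 := by
    intro h
    have := congrArg RatFunc.intDegree h
    have h4 : (q^4) = q^2 * q^2 := by ring
    rw [h4, RatFunc.intDegree_mul (pow_ne_zero _ hq0) (pow_ne_zero _ hq0),
      pow_two, RatFunc.intDegree_mul hq0 hq0, hq,
      RatFunc.intDegree_X, RatFunc.intDegree_one] at this
    omega
  have hden : q - q⁻¹ ≠ 0 := by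
    intro h
    apply hq2
    field_simp at h
    linear_combination h
  have hnum : q ^ (2:ℤ) - q ^ (-2:ℤ) ≠ 0 := by
    intro h
    apply hq4
    rw [sub_eq_zero] at h
    have : q ^ (2:ℤ) * q ^ (2:ℤ) = q ^ (-2:ℤ) * q ^ (2:ℤ) := by rw [h]
    rw [← zpow_add₀ hq0, ← zpow_add₀ hq0] at this
    norm_num at this
    exact_mod_cast this
  have h2ne : qint 2 ≠ 0 := by
    rw [hqint]
    exact div_ne_zero hnum hden
  subst hB hE hF hKinv
  refine ⟨![1, 0, -q⁻¹], ?_, rfl, ⟨0, -1, by simp, by simp, ?_, ?_⟩, ?_⟩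
  · funext i
    fin_cases i <;>
      simp [Matrix.mulVec, dotProduct, Fin.sum_univ_three, Matrix.mul_apply] <;>
      field_simp <;> norm_cast <;> ring
  · simp [RatFunc.intDegree_zero]
  · rw [show ((-1 : RatFunc ℚ)) = -(1 : RatFunc ℚ) by ring, RatFunc.intDegree_neg,
      RatFunc.intDegree_one]
  · intro w hw
    refine ⟨w 0, ?_⟩
    have h0 := congrFun hw 0
    have h1 := congrFun hw 1
    simp [Matrix.mulVec, dotProduct, Fin.sum_univ_three, Matrix.mul_apply] at h0 h1
    have hw1 : w 1 = 0 := by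
      rcases h0 with (h | h) | h
      · exact absurd h hq0
      · exact absurd h h2ne
      · exact h
    have hw2 : w 2 = -q⁻¹ * w 0 := by
      have hqq : q⁻¹ * q ^ 2 = q := by
        field_simp
      rw [hqq] at h1
      field_simp at h1 ⊢
      linear_combination h1
    funext i
    fin_cases i <;> simp [hw1, hw2] <;> ring
end

section
/- Let U = U_q(so_{2n}) (type D_n, n ≥ 4) and V(ϖ₁) its 2n-dimensional vector representation with canonical basis {v_i : i ∈ L}, L = {1,…,n,n̄,…,1̄}. For the type DII ıquantum group with I_• = {2,…,n} and B₁ := F₁ + q^{n-2} T_{w_•}(E₁) K₁^{-1}, one has B₁ v_{1̄} = q^{n-1} v₂, and the vector w₀ := v₁ - q^{-n+1} v_{1̄} spans a one-dimensional U^ı-submodule isomorphic to the trivial module. -/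
/-- Type DII. For `U_q(so_{2n})` acting on the vector
representation `V(ϖ₁)` with canonical basis `{v_i : i ∈ {1,…,n,n̄,…,1̄}}`,
and `B₁ = F₁ + q^{n-2} T_{w_•}(E₁) K₁^{-1}` (with `I_• = {2,…,n}`), one has
`B₁ v_{1̄} = q^{n-1} v₂`, and `w₀ = v₁ - q^{-(n-1)} v_{1̄}` spans a
one-dimensional `U^ı`-submodule isomorphic to the trivial module: the
generators `E_j, F_j (j ∈ I_•)` and `B₁` all annihilate `w₀`. -/
theorem stmt_10 {K V J : Type*} [Field K] [AddCommGroup V] [Module K V]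
    (n : ℕ) (hn : 4 ≤ n) (q : K) (hq : q ≠ 0)
    (v1 v2 v1bar v2bar : V)
    (E1 F1 K1inv TE1 : V →ₗ[K] V) (T : V ≃ₗ[K] V)
    (E F : J → V →ₗ[K] V)            -- E_j, F_j for j ∈ I_• = {2,…,n}
    (hTE1 : ∀ x : V, TE1 x = T (E1 (T.symm x)))
    (hF1bar : F1 v1bar = 0)
    (hK1bar : K1inv v1bar = q • v1bar)
    (hTinvbar : T.symm v1bar = v1bar)
    (hE1bar : E1 v1bar = v2bar)
    (hT2bar : T v2bar = v2)
    (hF1v1 : F1 v1 = v2) (hE1v1 : E1 v1 = 0)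
    (hK1v1 : K1inv v1 = q⁻¹ • v1) (hTinv1 : T.symm v1 = v1)
    (hEj : ∀ j : J, E j v1 = 0 ∧ E j v1bar = 0)
    (hFj : ∀ j : J, F j v1 = 0 ∧ F j v1bar = 0)
    (B1 : V →ₗ[K] V) (hB1 : B1 = F1 + q ^ (n - 2) • (TE1 ∘ₗ K1inv))
    (w0 : V) (hw0 : w0 = v1 - (q⁻¹) ^ (n - 1) • v1bar) :
    B1 v1bar = q ^ (n - 1) • v2 ∧
      B1 w0 = 0 ∧ ∀ j : J, E j w0 = 0 ∧ F j w0 = 0 := by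
  have hbar : B1 v1bar = q ^ (n - 1) • v2 := by
    rw [hB1]
    simp only [LinearMap.add_apply, LinearMap.smul_apply, LinearMap.comp_apply,
      hF1bar, hK1bar, map_smul, hTE1, hTinvbar, hE1bar, hT2bar, zero_add,
      smul_smul]
    rw [← pow_succ]
    have : n - 2 + 1 = n - 1 := by omega
    rw [this]
  have hv1 : B1 v1 = v2 := by
    rw [hB1]
    simp only [LinearMap.add_apply, LinearMap.smul_apply, LinearMap.comp_apply,
      hF1v1, hK1v1, map_smul, hTE1, hTinv1, hE1v1, map_zero, smul_zero, add_zero]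
  refine ⟨hbar, ?_, ?_⟩
  · rw [hw0, map_sub, map_smul, hv1, hbar, smul_smul, ← mul_pow,
      inv_mul_cancel₀ hq, one_pow, one_smul, sub_self]
  · intro j
    rw [hw0]
    simp [map_sub, (hEj j).1, (hEj j).2, (hFj j).1, (hFj j).2]
end

section
/- In the type C_n setting (n ≥ 3): inside V(ϖ₁) ⊗ V(ϖ₁) for U_q(sp_{2n}), with the vectors v_{k̄,k} := v_{k̄} ⊗ v_k + q^{-1} v_{\overline{k-1}} ⊗ v_{k-1} - q^{-1} v_{k-1} ⊗ v_{\overline{k-1}} - q^{-2} v_k ⊗ v_{k̄} for k = 2,…,n, the vector w₀' := -(1/[2]) v_{2̄,2} + Σ_{k=3}^n (-1)^{k-3} ([n-k+1]/[n-2]) v_{k̄,k} satisfies E_j w₀' = F_j w₀' = 0 for all j ∈ I_• = {1,3,4,…,n}. -/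
theorem aux12 {K V : Type*} [Field K] [AddCommGroup V] [Module K V]
    (n : ℕ) (hn : 3 ≤ n) (qi : ℤ → K)
    (h2 : qi 2 ≠ 0) (hqn2 : qi ((n : ℤ) - 2) ≠ 0) (h1 : qi 1 = 1)
    (hrec : ∀ m : ℤ, qi 2 * qi m = qi (m+1) + qi (m-1))
    (v u : ℕ → V) (F : ℕ → V →ₗ[K] V)
    (hF : ∀ i ∈ Finset.Icc 1 n, ∀ k ∈ Finset.Icc 2 n,
      F i (v k) = if k = i + 1 then qi 2 • u i
        else if k = i + 2 ∨ (k = i ∧ i < n) then u i else 0)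
    (w0' : V)
    (hw0' : w0' = -(qi 2)⁻¹ • v 2 +
      ∑ k ∈ Finset.Icc 3 n,
        ((-1 : K) ^ (k - 3) * qi ((n : ℤ) - (k : ℤ) + 1) / qi ((n : ℤ) - 2)) • v k)
    (j : ℕ) (hj : j = 1 ∨ (3 ≤ j ∧ j ≤ n)) : F j w0' = 0 := by
  set f : ℕ → K := fun k =>
    if k = j+1 then qi 2 else if k = j+2 ∨ (k = j ∧ j < n) then (1:K) else 0 with hfdef
  set c : ℕ → K := fun k =>
    (-1 : K) ^ (k - 3) * qi ((n : ℤ) - (k : ℤ) + 1) / qi ((n : ℤ) - 2) with hcdef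
  have hcval : ∀ k : ℕ,
      c k = (-1 : K) ^ (k - 3) * qi ((n : ℤ) - (k : ℤ) + 1) / qi ((n : ℤ) - 2) :=
    fun k => rfl
  have hjI : j ∈ Finset.Icc 1 n := by simp only [Finset.mem_Icc]; omega
  have hFk : ∀ k ∈ Finset.Icc 2 n, F j (v k) = f k • u j := by
    intro k hk
    rw [hF j hjI k hk]
    show _ = (if k = j+1 then qi 2 else if k = j+2 ∨ (k = j ∧ j < n) then (1:K) else 0) • u j
    by_cases ha : k = j + 1
    · simp [ha]
    · by_cases hb : k = j + 2 ∨ (k = j ∧ j < n) <;> simp [ha, hb]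
  have key : F j w0' = (-(qi 2)⁻¹ * f 2 + ∑ k ∈ Finset.Icc 3 n, c k * f k) • u j := by
    rw [hw0', map_add, map_smul, map_sum,
      hFk 2 (by simp only [Finset.mem_Icc]; omega)]
    rw [Finset.sum_congr rfl (fun k hk => by
      rw [map_smul, hFk k (by simp only [Finset.mem_Icc] at hk ⊢; omega), smul_smul])]
    rw [smul_smul, ← Finset.sum_smul, ← add_smul]
  rw [key]
  suffices hz : -(qi 2)⁻¹ * f 2 + ∑ k ∈ Finset.Icc 3 n, c k * f k = 0 by
    rw [hz, zero_smul]
  have hf0 : ∀ k, k ≠ j + 1 → ¬(k = j + 2 ∨ (k = j ∧ j < n)) → f k = 0 := by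
    intro k ha hb
    show (if k = j+1 then qi 2 else if k = j+2 ∨ (k = j ∧ j < n) then (1:K) else 0) = 0
    rw [if_neg ha, if_neg hb]
  have hf1 : ∀ k, k ≠ j + 1 → (k = j + 2 ∨ (k = j ∧ j < n)) → f k = 1 := by
    intro k ha hb
    show (if k = j+1 then qi 2 else if k = j+2 ∨ (k = j ∧ j < n) then (1:K) else 0) = 1
    rw [if_neg ha, if_pos hb]
  have hf2 : f (j+1) = qi 2 := by
    show (if j+1 = j+1 then qi 2 else _) = qi 2
    rw [if_pos rfl]
  rcases hj with rfl | ⟨hj3, hjn⟩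
  · -- j = 1
    rw [hf2, Finset.sum_eq_single_of_mem 3 (by simp only [Finset.mem_Icc]; omega)
      (fun k hk hne => by
        simp only [Finset.mem_Icc] at hk
        rw [hf0 k (by omega) (by omega), mul_zero])]
    rw [hf1 3 (by omega) (by omega), mul_one, hcval]
    have e : (n : ℤ) - ((3:ℕ) : ℤ) + 1 = (n : ℤ) - 2 := by push_cast; ring
    rw [e, show ((3:ℕ) - 3 : ℕ) = 0 from rfl, pow_zero, one_mul, div_self hqn2,
      neg_mul, inv_mul_cancel₀ h2]
    ring
  · -- 3 ≤ j ≤ n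
    rw [hf0 2 (by omega) (by omega), mul_zero, zero_add]
    by_cases hjn' : j = n
    · -- j = n : everything vanishes
      apply Finset.sum_eq_zero
      intro k hk
      simp only [Finset.mem_Icc] at hk
      rw [hf0 k (by omega) (by omega), mul_zero]
    by_cases hjn1 : j + 1 = n
    · -- two-point case: k = j and k = j+1 = n
      have hsub : ({j, j+1} : Finset ℕ) ⊆ Finset.Icc 3 n := by
        intro x hx
        simp only [Finset.mem_insert, Finset.mem_singleton] at hx
        simp only [Finset.mem_Icc]; omega
      rw [← Finset.sum_subset hsub (fun x hx hnx => by
        simp only [Finset.mem_Icc] at hx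
        simp only [Finset.mem_insert, Finset.mem_singleton] at hnx
        rw [hf0 x (by omega) (by omega), mul_zero])]
      rw [Finset.sum_insert (by simp only [Finset.mem_singleton]; omega),
        Finset.sum_singleton, hf1 j (by omega) (by omega), hf2, mul_one,
        hcval j, hcval (j+1)]
      have hnz : (n : ℤ) = (j : ℤ) + 1 := by exact_mod_cast congrArg (Nat.cast : ℕ → ℤ) hjn1.symm
      push_cast
      rw [show (n : ℤ) - (j:ℤ) + 1 = 2 by omega, show (n : ℤ) - ((j:ℤ) + 1) + 1 = 1 by omega,
        h1, show j - 2 = (j - 3) + 1 from by omega, pow_succ]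
      ring
    · -- three-point case: k = j, j+1, j+2
      have hsub : ({j, j+1, j+2} : Finset ℕ) ⊆ Finset.Icc 3 n := by
        intro x hx
        simp only [Finset.mem_insert, Finset.mem_singleton] at hx
        simp only [Finset.mem_Icc]; omega
      rw [← Finset.sum_subset hsub (fun x hx hnx => by
        simp only [Finset.mem_Icc] at hx
        simp only [Finset.mem_insert, Finset.mem_singleton] at hnx
        rw [hf0 x (by omega) (by omega), mul_zero])]
      rw [Finset.sum_insert (by simp only [Finset.mem_insert, Finset.mem_singleton]; omega),
        Finset.sum_insert (by simp only [Finset.mem_singleton]; omega),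
        Finset.sum_singleton, hf1 j (by omega) (by omega), hf2,
        hf1 (j+2) (by omega) (by omega), mul_one, mul_one,
        hcval j, hcval (j+1), hcval (j+2)]
      push_cast
      rw [show (n : ℤ) - ((j:ℤ) + 1) + 1 = (n:ℤ) - (j:ℤ) by ring,
        show (n : ℤ) - ((j:ℤ) + 2) + 1 = (n:ℤ) - (j:ℤ) - 1 by ring,
        show j - 2 = (j - 3) + 1 from by omega,
        show j - 1 = (j - 3) + 1 + 1 from by omega, pow_succ, pow_succ]
      linear_combination (-(-1:K)^(j-3) * (qi ((n:ℤ) - 2))⁻¹) * hrec ((n:ℤ) - (j:ℤ))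

/-- Type C_n (n ≥ 3).  With `v k` denoting the vector
`v_{k̄,k} ∈ V(ϖ₁) ⊗ V(ϖ₁)` for `k = 2,…,n`, and the action formulas
`F_i v_{k̄,k} = [2]·v_{ī,i+1}` if `k = i+1`, `= v_{ī,i+1}` if `k = i+2` or
`k = i < n`, `= 0` otherwise (and symmetrically for `E_i`), the vector
`w₀' = -(1/[2]) v_{2̄,2} + Σ_{k=3}^n (-1)^(k-3)([n-k+1]/[n-2]) v_{k̄,k}`
satisfies `E_j w₀' = F_j w₀' = 0` for all `j ∈ I_• = {1,3,4,…,n}`. -/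
theorem stmt_12 {K V : Type*} [Field K] [AddCommGroup V] [Module K V]
    (n : ℕ) (hn : 3 ≤ n) (q : K) (hq : q ≠ 0)
    (qi : ℤ → K) (hqi : ∀ k : ℤ, qi k = (q ^ k - q ^ (-k)) / (q - q⁻¹))
    (h2 : qi 2 ≠ 0) (hqn2 : qi ((n : ℤ) - 2) ≠ 0)
    (v : ℕ → V)        -- v k = v_{k̄,k}, for k = 2,…,n
    (uF uE : ℕ → V)    -- uF i = v_{ī,i+1}, uE i = v_{\overline{i+1},i}
    (E F : ℕ → V →ₗ[K] V)
    (hF : ∀ i ∈ Finset.Icc 1 n, ∀ k ∈ Finset.Icc 2 n,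
      F i (v k) = if k = i + 1 then qi 2 • uF i
        else if k = i + 2 ∨ (k = i ∧ i < n) then uF i else 0)
    (hE : ∀ i ∈ Finset.Icc 1 n, ∀ k ∈ Finset.Icc 2 n,
      E i (v k) = if k = i + 1 then qi 2 • uE i
        else if k = i + 2 ∨ (k = i ∧ i < n) then uE i else 0)
    (w0' : V)
    (hw0' : w0' = -(qi 2)⁻¹ • v 2 +
      ∑ k ∈ Finset.Icc 3 n,
        ((-1 : K) ^ (k - 3) * qi ((n : ℤ) - (k : ℤ) + 1) / qi ((n : ℤ) - 2)) • v k)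
    (Ibul : Set ℕ) (hIbul : Ibul = {1} ∪ {i | 3 ≤ i ∧ i ≤ n}) :
    ∀ j ∈ Ibul, E j w0' = 0 ∧ F j w0' = 0 := by
  have hd : q - q⁻¹ ≠ 0 := by
    intro h
    apply h2
    rw [hqi, h, div_zero]
  have h1 : qi 1 = 1 := by
    rw [hqi]
    simp only [zpow_one, zpow_neg, zpow_one]
    exact div_self hd
  have hq2 : q * q - 1 ≠ 0 := by
    intro h
    apply hd
    rw [inv_eq_of_mul_eq_one_right (show q * q = 1 by linear_combination h), sub_self]
  have hrec : ∀ m : ℤ, qi 2 * qi m = qi (m+1) + qi (m-1) := by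
    intro m
    have hqm : (q ^ m) ≠ 0 := zpow_ne_zero _ hq
    rw [hqi, hqi, hqi, hqi]
    simp only [zpow_add₀ hq, zpow_sub₀ hq, zpow_neg, zpow_one, zpow_two]
    have hq3 : q - q⁻¹ ≠ 0 := by
      rw [show q - q⁻¹ = (q * q - 1) / q by field_simp]
      exact div_ne_zero hq2 hq
    have hq4 : q ^ 2 - 1 ≠ 0 := by rw [sq]; exact hq2
    field_simp
    ring
  intro j hj
  have hj' : j = 1 ∨ (3 ≤ j ∧ j ≤ n) := by
    rw [hIbul] at hj
    simpa using hj
  exact ⟨aux12 n hn qi h2 hqn2 h1 hrec v uE E hE w0' hw0' j hj',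
    aux12 n hn qi h2 hqn2 h1 hrec v uF F hF w0' hw0' j hj'⟩
end

section
/- Let (I_•, τ) be an admissible pair of type AIV: I = {1,…,n} of type A_n (n ≥ 2), I_• = {2,…,n-1}, τ(i) = n-i+1. Then for every fundamental weight ϖ_i, ϖ_i + w_•(τϖ_i) = ϖ₁ + ϖ_n; consequently ν + w_•τν ∈ Z_{≥0}·(ϖ₁ + ϖ_n) for every dominant weight ν. -/
/-- Type AIV (`I = {1,…,n}` of type `A_n`, `n ≥ 2`,
`I_• = {2,…,n-1}`, `τ(i) = n-i+1`).  Realizing the weights in `ℤ^{n+1}` (with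
`ϖ_{i+1} = e_0 + ⋯ + e_i`, `0`-indexed), `w_•` acts by the permutation `σ`
reversing coordinates `1,…,n-1`, and `τ` sends `ϖ_{i+1}` to `ϖ_{n-i}`.  Then
`ϖ_i + w_•(τϖ_i) = ϖ₁ + ϖ_n` for every fundamental weight, and consequently
`ν + w_•τν ∈ ℤ_{≥0}·(ϖ₁ + ϖ_n)` for every dominant `ν = Σ cᵢ ϖᵢ`. -/
theorem stmt_18 (n : ℕ) (hn : 2 ≤ n)
    (ϖ : Fin n → (Fin (n + 1) → ℤ))
    (hϖ : ∀ i : Fin n, ϖ i = fun k : Fin (n + 1) => if (k : ℕ) ≤ (i : ℕ) then (1 : ℤ) else 0)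
    (σ : Fin (n + 1) → Fin (n + 1))
    (hσ : ∀ k : Fin (n + 1), σ k =
      if 1 ≤ (k : ℕ) ∧ (k : ℕ) ≤ n - 1 then ⟨n - (k : ℕ), by omega⟩ else k)
    (w : (Fin (n + 1) → ℤ) → (Fin (n + 1) → ℤ)) (hw : ∀ f, w f = f ∘ σ)
    (τ : Fin n → Fin n)
    (hτ : ∀ i : Fin n, τ i = ⟨n - 1 - (i : ℕ), by omega⟩) :
    (∀ i : Fin n, ϖ i + w (ϖ (τ i)) = ϖ ⟨0, by omega⟩ + ϖ ⟨n - 1, by omega⟩) ∧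
      ∀ c : Fin n → ℕ, ∃ m : ℕ,
        (∑ i, (c i : ℤ) • ϖ i) + w (∑ i, (c i : ℤ) • ϖ (τ i))
          = (m : ℤ) • (ϖ ⟨0, by omega⟩ + ϖ ⟨n - 1, by omega⟩) := by
  have hσval : ∀ k : Fin (n + 1), (σ k : ℕ) =
      if 1 ≤ (k : ℕ) ∧ (k : ℕ) ≤ n - 1 then n - (k : ℕ) else (k : ℕ) := by
    intro k; rw [hσ]; split <;> simp
  have key : ∀ i : Fin n, ϖ i + w (ϖ (τ i)) = ϖ ⟨0, by omega⟩ + ϖ ⟨n - 1, by omega⟩ := by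
    intro i
    funext k
    simp only [hw, hϖ, hτ, Pi.add_apply, Function.comp_apply]
    rw [hσval k]
    have hk := k.isLt
    have hi := i.isLt
    split_ifs <;> omega
  refine ⟨key, fun c => ⟨∑ i, c i, ?_⟩⟩
  have hwsum : w (∑ i, (c i : ℤ) • ϖ (τ i)) = ∑ i, (c i : ℤ) • w (ϖ (τ i)) := by
    funext k
    simp [hw, Finset.sum_apply]
  rw [hwsum, ← Finset.sum_add_distrib]
  have : ∀ i : Fin n, (c i : ℤ) • ϖ i + (c i : ℤ) • w (ϖ (τ i))
      = (c i : ℤ) • (ϖ ⟨0, by omega⟩ + ϖ ⟨n - 1, by omega⟩) := by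
    intro i; rw [← smul_add, key i]
  rw [Finset.sum_congr rfl (fun i _ => this i), ← Finset.sum_smul]
  push_cast
  ring_nf
end
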